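/- arXiv:2507.09437 — 2 statements merged into one kernel-verified Lean document; each statement's English description precedes it below -/
import Mathlib

section
/- Let d ≥ 1 and let F : ℝ^d ⇒ ℝ^d be a cyclically quasi-monotone multi-map with full domain. If the relation ⪯_F is total (for every x, y ∈ ℝ^d, x ⪯_F y or y ⪯_F x), then there exists a lower semi-continuous quasi-convex function f : ℝ^d → ℝ such that F(x) ⊆ N_f(x) for every x ∈ ℝ^d. -/
open scoped RealInnerProductSpace

/-- Cyclic quasi-monotonicity of a multi-map `F : ℝ^d ⇒ ℝ^d`. -/
def CyclicallyQuasiMonotone {d : ℕ}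
    (F : EuclideanSpace ℝ (Fin d) → Set (EuclideanSpace ℝ (Fin d))) : Prop :=
  ∀ (N : ℕ) (x p : ℕ → EuclideanSpace ℝ (Fin d)),
    0 < N → x N = x 0 → (∀ i < N, p i ∈ F (x i)) →
    ∃ i < N, ⟪p i, x (i + 1) - x i⟫ ≤ 0

/-- `x 0, …, x N` is an `F`-ascending path. -/
def AscendingPath {d : ℕ} (F : EuclideanSpace ℝ (Fin d) → Set (EuclideanSpace ℝ (Fin d)))
    (x : ℕ → EuclideanSpace ℝ (Fin d)) (N : ℕ) : Prop :=
  ∀ i < N, ∃ p ∈ F (x i), 0 < ⟪p, x (i + 1) - x i⟫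

/-- `a ≺_F b`: there is an `F`-ascending path from `a` to `b`. -/
def PrecF {d : ℕ} (F : EuclideanSpace ℝ (Fin d) → Set (EuclideanSpace ℝ (Fin d)))
    (a b : EuclideanSpace ℝ (Fin d)) : Prop :=
  ∃ (N : ℕ) (x : ℕ → EuclideanSpace ℝ (Fin d)),
    0 < N ∧ x 0 = a ∧ x N = b ∧ AscendingPath F x N

/-- `a ⪯_F b`: `{w : w ≺_F a} ⊆ {w : w ≺_F b}`. -/
def PreceqF {d : ℕ} (F : EuclideanSpace ℝ (Fin d) → Set (EuclideanSpace ℝ (Fin d)))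
    (a b : EuclideanSpace ℝ (Fin d)) : Prop :=
  ∀ w, PrecF F w a → PrecF F w b

/-- The convex set `C^F(x) = {w : w ⪯_F x}`. -/
def CF {d : ℕ} (F : EuclideanSpace ℝ (Fin d) → Set (EuclideanSpace ℝ (Fin d)))
    (x : EuclideanSpace ℝ (Fin d)) : Set (EuclideanSpace ℝ (Fin d)) :=
  {w | PreceqF F w x}

/-- The normal cone multi-map of a real-valued function `f`. -/
def NormalConeMap {d : ℕ} (f : EuclideanSpace ℝ (Fin d) → ℝ) (x : EuclideanSpace ℝ (Fin d)) :
    Set (EuclideanSpace ℝ (Fin d)) :=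
  {p | ∀ w, f w ≤ f x → ⟪p, w - x⟫ ≤ 0}

/-!
Cyclic quasi-monotonicity makes `≺_F` irreflexive, so for `p ∈ F x` every point of the open
half-space `{v | 0 < ⟪p, v - x⟫}` lies strictly above `x` for the preorder `⪯_F`. Enumerating a
countable basis `(b n)`, the function `g x = -∑ {2⁻ⁿ | no point of b n is ⪯_F x}` is
`⪯_F`-monotone and jumps by at least `2⁻ᵐ` from `x` to every point of a basic set `b m` lying
strictly above `x`. Its sublevel sets are `⪯_F`-lower sets, and these are convex when `⪯_F` is total, since
an ascending step into a point of a segment is an ascending step into one of its endpoints.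
The lower semicontinuous envelope `f` of `g` keeps convex sublevel sets (closures of convex sets)
and the jump, which rules out `⟪p, w - x⟫ > 0` with `f w ≤ f x`.
-/

open Set Filter Topology

section LscEnvelope

variable {X : Type*} [TopologicalSpace X]

noncomputable def lscEnvelope (g : X → ℝ) (x : X) : ℝ := liminf g (𝓝 x)

variable {g : X → ℝ}

lemma isCoboundedUnder_ge_nhds (x : X) : IsCoboundedUnder (· ≥ ·) (𝓝 x) g :=
  ⟨g x, fun _ ha => (eventually_map.1 ha).self_of_nhds⟩

lemma lscEnvelope_le (hg : BddBelow (range g)) (x : X) : lscEnvelope g x ≤ g x :=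
  liminf_le_of_frequently_le (frequently_iff.2 fun hV => ⟨x, mem_of_mem_nhds hV, le_rfl⟩)
    hg.isBoundedUnder_of_range

lemma le_lscEnvelope_of_eventually {x : X} {c : ℝ} (h : ∀ᶠ v in 𝓝 x, c ≤ g v) :
    c ≤ lscEnvelope g x :=
  le_liminf_of_le (isCoboundedUnder_ge_nhds x) h

lemma lowerSemicontinuous_lscEnvelope (hg : BddBelow (range g)) :
    LowerSemicontinuous (lscEnvelope g) := by
  intro x y hy
  obtain ⟨a, hya, hax⟩ := exists_between hy
  have hev : ∀ᶠ v in 𝓝 x, a < g v := eventually_lt_of_lt_liminf hax hg.isBoundedUnder_of_range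
  filter_upwards [eventually_eventually_nhds.2 hev] with v hv
  exact hya.trans_le (le_lscEnvelope_of_eventually (hv.mono fun _ => le_of_lt))

lemma setOf_lscEnvelope_le (hg : BddBelow (range g)) (ℓ : ℝ) :
    {x | lscEnvelope g x ≤ ℓ} = ⋂ (ε : ℝ) (_ : 0 < ε), closure {v | g v ≤ ℓ + ε} := by
  ext x
  simp only [mem_ofPred_eq, mem_iInter, mem_closure_iff_frequently]
  constructor
  · intro hx ε hε
    by_contra h
    have := le_lscEnvelope_of_eventually ((not_frequently.1 h).mono fun _ hv => (not_le.1 hv).le)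
    linarith
  · intro hx
    exact le_of_forall_pos_le_add fun ε hε =>
      liminf_le_of_frequently_le (hx ε hε) hg.isBoundedUnder_of_range

lemma convex_setOf_lscEnvelope_le {E : Type*} [AddCommGroup E] [Module ℝ E] [TopologicalSpace E]
    [IsTopologicalAddGroup E] [ContinuousSMul ℝ E] {g : E → ℝ} (hg : BddBelow (range g))
    (hconv : ∀ ℓ, Convex ℝ {x | g x ≤ ℓ}) (ℓ : ℝ) : Convex ℝ {x | lscEnvelope g x ≤ ℓ} := by
  rw [setOf_lscEnvelope_le hg]
  exact convex_iInter₂ fun ε _ => (hconv _).closure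

end LscEnvelope

section GeomWeight

noncomputable def geomWeight (s : Set ℕ) : ℝ := ∑' n, s.indicator (fun n => ((1 : ℝ) / 2) ^ n) n

lemma summable_geomWeight (s : Set ℕ) : Summable (s.indicator fun n => ((1 : ℝ) / 2) ^ n) :=
  summable_geometric_two.indicator s

lemma geomWeight_nonneg (s : Set ℕ) : 0 ≤ geomWeight s :=
  tsum_nonneg fun _ => indicator_nonneg (fun _ _ => by positivity) _

lemma geomWeight_le_two (s : Set ℕ) : geomWeight s ≤ 2 := by
  rw [← tsum_geometric_two]
  exact (summable_geomWeight s).tsum_le_tsum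
    (indicator_le_self' fun _ _ => by positivity) summable_geometric_two

lemma pow_le_geomWeight {s : Set ℕ} {m : ℕ} (hm : m ∈ s) : ((1 : ℝ) / 2) ^ m ≤ geomWeight s := by
  simpa [hm, geomWeight] using (summable_geomWeight s).le_tsum m
    fun _ _ => indicator_nonneg (fun _ _ => by positivity) _

lemma geomWeight_eq_add_diff {s t : Set ℕ} (hst : s ⊆ t) :
    geomWeight t = geomWeight s + geomWeight (t \ s) := by
  rw [geomWeight, ← union_sdiff_cancel hst, indicator_union_of_disjoint disjoint_sdiff_right,
    Summable.tsum_add (summable_geomWeight s) (summable_geomWeight _), union_sdiff_cancel hst]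
  rfl

lemma geomWeight_mono {s t : Set ℕ} (hst : s ⊆ t) : geomWeight s ≤ geomWeight t := by
  rw [geomWeight_eq_add_diff hst]
  linarith [geomWeight_nonneg (t \ s)]

lemma geomWeight_add_pow_le {s t : Set ℕ} {m : ℕ} (hst : s ⊆ t) (hm : m ∈ t \ s) :
    geomWeight s + ((1 : ℝ) / 2) ^ m ≤ geomWeight t := by
  rw [geomWeight_eq_add_diff hst]
  linarith [pow_le_geomWeight hm]

end GeomWeight

lemma exists_bddBelow_utility {X : Type*} [TopologicalSpace X] [SecondCountableTopology X]
    (r : X → X → Prop) (hrefl : ∀ x, r x x) (htrans : ∀ x y z, r x y → r y z → r x z) :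
    ∃ g : X → ℝ, BddBelow (range g) ∧ (∀ x y, r x y → g x ≤ g y) ∧
      ∀ x w, {v | r x v ∧ ¬ r v x} ∈ 𝓝 w → ∃ ε > 0, ∀ᶠ v in 𝓝 w, g x + ε ≤ g v := by
  obtain ⟨b, hb⟩ := TopologicalSpace.exists_seq_basis X
  set U : X → Set X := fun x => {w | ¬ r w x}
  have hU : ∀ x y, r x y → {n | b n ⊆ U y} ⊆ {n | b n ⊆ U x} :=
    fun x y hxy n hn w hw hwx => hn hw (htrans w x y hwx hxy)
  refine ⟨fun x => -geomWeight {n | b n ⊆ U x}, ⟨-2, ?_⟩, ?_, ?_⟩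
  · rintro _ ⟨x, rfl⟩
    linarith [geomWeight_le_two {n | b n ⊆ U x}]
  · exact fun x y hxy => neg_le_neg (geomWeight_mono (hU x y hxy))
  · intro x w hw
    obtain ⟨_, ⟨m, rfl⟩, hwm, hmW⟩ := hb.mem_nhds_iff.1 hw
    refine ⟨((1 : ℝ) / 2) ^ m, by positivity, ?_⟩
    filter_upwards [(hb.isOpen ⟨m, rfl⟩).mem_nhds hwm] with v hv
    have hm : m ∈ {n | b n ⊆ U x} \ {n | b n ⊆ U v} :=
      ⟨fun u hu => (hmW hu).2, fun hmv => hmv hv (hrefl v)⟩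
    linarith [geomWeight_add_pow_le (hU x v (hmW hv).1) hm]

section Ascending

variable {d : ℕ} {F : EuclideanSpace ℝ (Fin d) → Set (EuclideanSpace ℝ (Fin d))}

def AscendingStep (F : EuclideanSpace ℝ (Fin d) → Set (EuclideanSpace ℝ (Fin d)))
    (x y : EuclideanSpace ℝ (Fin d)) : Prop :=
  ∃ p ∈ F x, 0 < ⟪p, y - x⟫

lemma AscendingPath.transGen {x : ℕ → EuclideanSpace ℝ (Fin d)} :
    ∀ {N : ℕ}, 0 < N → AscendingPath F x N → Relation.TransGen (AscendingStep F) (x 0) (x N)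
  | 0, hN, _ => (lt_irrefl 0 hN).elim
  | 1, _, hx => .single (hx 0 one_pos)
  | N + 2, _, hx =>
    .tail (transGen N.succ_pos fun i hi => hx i (by omega)) (hx (N + 1) (by omega))

lemma precF_iff_transGen {a b : EuclideanSpace ℝ (Fin d)} :
    PrecF F a b ↔ Relation.TransGen (AscendingStep F) a b := by
  constructor
  · rintro ⟨N, x, hN, rfl, rfl, hx⟩
    exact hx.transGen hN
  · intro h
    induction h with
    | single hab =>
      refine ⟨1, fun i => if i = 0 then a else _, one_pos, rfl, rfl, fun i hi => ?_⟩
      obtain rfl : i = 0 := by omega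
      simpa [AscendingStep] using hab
    | @tail b c _ hbc ih =>
      obtain ⟨N, x, hN, hx0, hxN, hx⟩ := ih
      refine ⟨N + 1, fun i => if i ≤ N then x i else c, N.succ_pos, by simpa using hx0,
        by simp, fun i hi => ?_⟩
      rcases Nat.lt_or_ge i N with hiN | hiN
      · simpa [hiN.le, Nat.succ_le_of_lt hiN] using hx i hiN
      · obtain rfl : i = N := by omega
        simpa [AscendingStep, hxN] using hbc

lemma PrecF.trans {a b c : EuclideanSpace ℝ (Fin d)} (hab : PrecF F a b) (hbc : PrecF F b c) :
    PrecF F a c :=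
  precF_iff_transGen.2 ((precF_iff_transGen.1 hab).trans (precF_iff_transGen.1 hbc))

lemma PrecF.preceqF {a b : EuclideanSpace ℝ (Fin d)} (h : PrecF F a b) : PreceqF F a b :=
  fun _ hw => hw.trans h

lemma preceqF_refl (a : EuclideanSpace ℝ (Fin d)) : PreceqF F a a := fun _ => id

lemma PreceqF.trans {a b c : EuclideanSpace ℝ (Fin d)} (hab : PreceqF F a b)
    (hbc : PreceqF F b c) : PreceqF F a c :=
  fun w hw => hbc w (hab w hw)

lemma precF_irrefl (hF : CyclicallyQuasiMonotone F) (a : EuclideanSpace ℝ (Fin d)) :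
    ¬ PrecF F a a := by
  rintro ⟨N, x, hN, hx0, hxN, hx⟩
  choose! p hp hpos using hx
  obtain ⟨i, hi, hle⟩ := hF N x p hN (hxN.trans hx0.symm) hp
  exact (hpos i hi).not_ge hle

lemma PrecF.not_preceqF (hF : CyclicallyQuasiMonotone F) {a b : EuclideanSpace ℝ (Fin d)}
    (h : PrecF F a b) : ¬ PreceqF F b a :=
  fun hba => precF_irrefl hF a (hba a h)

lemma AscendingStep.precF {x y : EuclideanSpace ℝ (Fin d)} (h : AscendingStep F x y) :
    PrecF F x y :=
  precF_iff_transGen.2 (.single h)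

lemma ascendingStep_or_of_mem_segment {q a b z : EuclideanSpace ℝ (Fin d)}
    (hz : z ∈ segment ℝ a b) (h : AscendingStep F q z) :
    AscendingStep F q a ∨ AscendingStep F q b := by
  obtain ⟨p, hp, hpos⟩ := h
  by_contra! hab
  simp only [AscendingStep, not_exists, not_and, not_lt] at hab
  have hhalf : Convex ℝ {v : EuclideanSpace ℝ (Fin d) | ⟪p, v⟫ ≤ ⟪p, q⟫} :=
    convex_halfSpace_le (innerₛₗ ℝ p).isLinear _
  have ha : a ∈ {v : EuclideanSpace ℝ (Fin d) | ⟪p, v⟫ ≤ ⟪p, q⟫} := by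
    simpa [inner_sub_right] using hab.1 p hp
  have hb : b ∈ {v : EuclideanSpace ℝ (Fin d) | ⟪p, v⟫ ≤ ⟪p, q⟫} := by
    simpa [inner_sub_right] using hab.2 p hp
  have hzq : ⟪p, z⟫ ≤ ⟪p, q⟫ := hhalf.segment_subset ha hb hz
  rw [inner_sub_right] at hpos
  linarith

lemma precF_or_of_mem_segment {w a b z : EuclideanSpace ℝ (Fin d)}
    (hz : z ∈ segment ℝ a b) (h : PrecF F w z) : PrecF F w a ∨ PrecF F w b := by
  obtain ⟨q, hwq, hqz⟩ := Relation.TransGen.tail'_iff.1 (precF_iff_transGen.1 h)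
  exact (ascendingStep_or_of_mem_segment hz hqz).imp
    (fun hqa => precF_iff_transGen.2 (.tail' hwq hqa))
    (fun hqb => precF_iff_transGen.2 (.tail' hwq hqb))

lemma preceqF_of_mem_segment {a b z : EuclideanSpace ℝ (Fin d)} (hab : PreceqF F a b)
    (hz : z ∈ segment ℝ a b) : PreceqF F z b :=
  fun w hw => (precF_or_of_mem_segment hz hw).elim (hab w) id

lemma convex_of_preceqF_lowerSet (htotal : ∀ x y, PreceqF F x y ∨ PreceqF F y x)
    {S : Set (EuclideanSpace ℝ (Fin d))} (hS : ∀ x y, PreceqF F x y → y ∈ S → x ∈ S) :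
    Convex ℝ S := by
  refine convex_iff_segment_subset.2 fun a ha b hb z hz => ?_
  rcases htotal a b with hab | hba
  · exact hS z b (preceqF_of_mem_segment hab hz) hb
  · exact hS z a (preceqF_of_mem_segment hba (segment_symm ℝ a b ▸ hz)) ha

lemma setOf_ascendingStep_subset (hF : CyclicallyQuasiMonotone F)
    {x p : EuclideanSpace ℝ (Fin d)} (hp : p ∈ F x) :
    {v | 0 < ⟪p, v - x⟫} ⊆ {v | PreceqF F x v ∧ ¬ PreceqF F v x} := fun v hv =>
  have hxv : PrecF F x v := AscendingStep.precF ⟨p, hp, hv⟩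
  ⟨hxv.preceqF, hxv.not_preceqF hF⟩

end Ascending

theorem stmt9_general (d : ℕ)
    (F : EuclideanSpace ℝ (Fin d) → Set (EuclideanSpace ℝ (Fin d)))
    (hF : CyclicallyQuasiMonotone F)
    (htotal : ∀ x y, PreceqF F x y ∨ PreceqF F y x) :
    ∃ f : EuclideanSpace ℝ (Fin d) → ℝ, LowerSemicontinuous f ∧
      (∀ ℓ : ℝ, Convex ℝ {x | f x ≤ ℓ}) ∧
      ∀ x, F x ⊆ NormalConeMap f x := by
  obtain ⟨g, hbdd, hmono, hgap⟩ :=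
    exists_bddBelow_utility (PreceqF F) preceqF_refl fun _ _ _ => PreceqF.trans
  refine ⟨lscEnvelope g, lowerSemicontinuous_lscEnvelope hbdd,
    convex_setOf_lscEnvelope_le hbdd fun ℓ =>
      convex_of_preceqF_lowerSet htotal fun x y hxy hy => (hmono x y hxy).trans hy, ?_⟩
  intro x p hp w hw
  by_contra! hpos
  have hhalf : {v | 0 < ⟪p, v - x⟫} ∈ 𝓝 w :=
    (isOpen_lt continuous_const (by fun_prop)).mem_nhds hpos
  obtain ⟨ε, hε, hev⟩ := hgap x w (mem_of_superset hhalf (setOf_ascendingStep_subset hF hp))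
  linarith [le_lscEnvelope_of_eventually hev, lscEnvelope_le hbdd x]

theorem stmt9 (d : ℕ) (hd : 1 ≤ d)
    (F : EuclideanSpace ℝ (Fin d) → Set (EuclideanSpace ℝ (Fin d)))
    (hdom : ∀ x, (F x).Nonempty) (hF : CyclicallyQuasiMonotone F)
    (htotal : ∀ x y, PreceqF F x y ∨ PreceqF F y x) :
    ∃ f : EuclideanSpace ℝ (Fin d) → ℝ, LowerSemicontinuous f ∧
      (∀ ℓ : ℝ, Convex ℝ {x | f x ≤ ℓ}) ∧
      ∀ x, F x ⊆ NormalConeMap f x :=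
  stmt9_general d F hF htotal
end

section
/- Let F : ℝ ⇒ ℝ be a cyclically quasi-monotone multi-map with full domain, and let C_* = ⋂_{x∈ℝ} C^F(x). If C_* is empty or is a closed half-line, then the relation ⪯_F is total: for all x, y ∈ ℝ, either x ⪯_F y or y ⪯_F x. -/
/-- Cyclic quasi-monotonicity of a multi-map `F : ℝ ⇒ ℝ`. -/
def CyclicallyQuasiMonotone1 (F : ℝ → Set ℝ) : Prop :=
  ∀ (N : ℕ) (x p : ℕ → ℝ),
    0 < N → x N = x 0 → (∀ i < N, p i ∈ F (x i)) →
    ∃ i < N, p i * (x (i + 1) - x i) ≤ 0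

/-- `x 0, …, x N` is an `F`-ascending path. -/
def AscendingPath1 (F : ℝ → Set ℝ) (x : ℕ → ℝ) (N : ℕ) : Prop :=
  ∀ i < N, ∃ p ∈ F (x i), 0 < p * (x (i + 1) - x i)

/-- `a ≺_F b`: there is an `F`-ascending path from `a` to `b`. -/
def PrecF1 (F : ℝ → Set ℝ) (a b : ℝ) : Prop :=
  ∃ (N : ℕ) (x : ℕ → ℝ), 0 < N ∧ x 0 = a ∧ x N = b ∧ AscendingPath1 F x N

/-- `a ⪯_F b`: `{w : w ≺_F a} ⊆ {w : w ≺_F b}`. -/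
def PreceqF1 (F : ℝ → Set ℝ) (a b : ℝ) : Prop :=
  ∀ w, PrecF1 F w a → PrecF1 F w b

/-- The convex set `C^F(x) = {w : w ⪯_F x}`. -/
def CF1 (F : ℝ → Set ℝ) (x : ℝ) : Set ℝ :=
  {w | PreceqF1 F w x}

/-!
If `F` takes no negative values, replacing the endpoint of an ascending path by a larger point
keeps it ascending, so `x ≤ y` implies `x ⪯_F y`; symmetrically if `F` takes no positive values.
Otherwise cyclic quasi-monotonicity forces every point carrying a negative value to lie below
every point carrying a positive value. The supremum `w₀` of the former points has no ascending
step into it, so nothing precedes it and `w₀ ∈ C_*`; and a point with a negative (positive) value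
bounds `C_*` from below (above). A nonempty bounded `C_*` is neither empty nor a half-line.
-/

section

variable {F : ℝ → Set ℝ}

lemma CyclicallyQuasiMonotone1.not_precF1_self (hF : CyclicallyQuasiMonotone1 F) (a : ℝ) :
    ¬ PrecF1 F a a := by
  rintro ⟨N, x, hN, h0, hNa, hasc⟩
  choose! p hp hpos using hasc
  obtain ⟨i, hi, hle⟩ := hF N x p hN (by rw [hNa, h0]) hp
  exact (hpos i hi).not_ge hle

lemma precF1_of_mem {a b p : ℝ} (hp : p ∈ F a) (h : 0 < p * (b - a)) : PrecF1 F a b := by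
  refine ⟨1, fun i => if i = 0 then a else b, one_pos, rfl, rfl, fun i hi => ?_⟩
  obtain rfl : i = 0 := by omega
  exact ⟨p, hp, h⟩

lemma PrecF1.exists_last_step {w y : ℝ} (h : PrecF1 F w y) :
    ∃ a, ∃ p ∈ F a, 0 < p * (y - a) := by
  obtain ⟨N, x, hN, -, hNy, hasc⟩ := h
  obtain ⟨p, hp, hpos⟩ := hasc (N - 1) (by omega)
  rw [Nat.sub_add_cancel hN, hNy] at hpos
  exact ⟨x (N - 1), p, hp, hpos⟩

lemma PrecF1.replace_last {w x y : ℝ} (h : PrecF1 F w x)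
    (hstep : ∀ a, ∀ p ∈ F a, 0 < p * (x - a) → 0 < p * (y - a)) : PrecF1 F w y := by
  obtain ⟨N, xs, hN, h0, hNx, hasc⟩ := h
  refine ⟨N, Function.update xs N y, hN, ?_, Function.update_self .., fun i hi => ?_⟩
  · rwa [Function.update_of_ne hN.ne]
  obtain ⟨p, hp, hpos⟩ := hasc i hi
  rw [Function.update_of_ne hi.ne]
  refine ⟨p, hp, ?_⟩
  by_cases hiN : i + 1 = N
  · rw [hiN, Function.update_self]
    exact hstep _ p hp (hNx ▸ hiN ▸ hpos)
  · rwa [Function.update_of_ne hiN]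

lemma preceqF1_of_le_of_nonneg (hF : ∀ a, ∀ p ∈ F a, 0 ≤ p) {x y : ℝ} (hxy : x ≤ y) :
    PreceqF1 F x y := fun _ hw =>
  hw.replace_last fun a p hp hpos => by nlinarith [mul_nonneg (hF a p hp) (sub_nonneg.2 hxy)]

lemma preceqF1_of_ge_of_nonpos (hF : ∀ a, ∀ p ∈ F a, p ≤ 0) {x y : ℝ} (hyx : y ≤ x) :
    PreceqF1 F x y := fun _ hw =>
  hw.replace_last fun a p hp hpos => by
    nlinarith [mul_nonpos_of_nonpos_of_nonneg (hF a p hp) (sub_nonneg.2 hyx)]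

lemma CyclicallyQuasiMonotone1.le_of_neg_of_pos (hF : CyclicallyQuasiMonotone1 F)
    {a b p q : ℝ} (hp : p ∈ F a) (hq : q ∈ F b) (hp0 : 0 < p) (hq0 : q < 0) : b ≤ a := by
  by_contra! hab
  obtain ⟨N, x, hN, h0, hNa, hasc⟩ : PrecF1 F b a := precF1_of_mem hq (by nlinarith)
  -- the step `a → b` followed by the path from `b` back to `a` is an ascending cycle
  refine hF.not_precF1_self a ⟨N + 1, fun i => if i = 0 then a else x (i - 1), by omega, rfl,
    by simpa using hNa, fun i hi => ?_⟩
  rcases i with _ | i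
  · exact ⟨p, hp, show 0 < p * (x 0 - a) by rw [h0]; nlinarith⟩
  · simpa using hasc i (by omega)

lemma mem_iInter_CF1_iff (hF : CyclicallyQuasiMonotone1 F) {w : ℝ} :
    w ∈ ⋂ x, CF1 F x ↔ ∀ a, ¬ PrecF1 F a w := by
  simp only [Set.mem_iInter, CF1, Set.mem_ofPred_eq, PreceqF1]
  exact ⟨fun hw a ha => hF.not_precF1_self a (hw a a ha), fun hw _ a ha => absurd ha (hw a)⟩

lemma le_of_mem_iInter_CF1 (hF : CyclicallyQuasiMonotone1 F) {a q w : ℝ} (hq : q ∈ F a)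
    (hq0 : q < 0) (hw : w ∈ ⋂ x, CF1 F x) : a ≤ w := by
  by_contra! hwa
  exact (mem_iInter_CF1_iff hF).1 hw a (precF1_of_mem hq (by nlinarith))

lemma ge_of_mem_iInter_CF1 (hF : CyclicallyQuasiMonotone1 F) {a p w : ℝ} (hp : p ∈ F a)
    (hp0 : 0 < p) (hw : w ∈ ⋂ x, CF1 F x) : w ≤ a := by
  by_contra! haw
  exact (mem_iInter_CF1_iff hF).1 hw a (precF1_of_mem hp (by nlinarith))

lemma iInter_CF1_nonempty (hF : CyclicallyQuasiMonotone1 F) {a b p q : ℝ} (hp : p ∈ F a)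
    (hq : q ∈ F b) (hp0 : 0 < p) (hq0 : q < 0) : (⋂ x, CF1 F x).Nonempty := by
  set S : Set ℝ := {c | ∃ r ∈ F c, r < 0}
  have hS : S.Nonempty := ⟨b, q, hq, hq0⟩
  have hSbdd : BddAbove S := ⟨a, fun c ⟨r, hr, hr0⟩ => hF.le_of_neg_of_pos hp hr hp0 hr0⟩
  refine ⟨sSup S, (mem_iInter_CF1_iff hF).2 fun w hw => ?_⟩
  obtain ⟨c, r, hr, hpos⟩ := hw.exists_last_step
  rcases lt_trichotomy r 0 with hr0 | rfl | hr0
  · have hc : c ≤ sSup S := le_csSup hSbdd ⟨r, hr, hr0⟩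
    nlinarith
  · simp at hpos
  · have hc : sSup S ≤ c := csSup_le hS fun d ⟨s, hs, hs0⟩ => hF.le_of_neg_of_pos hr hs hr0 hs0
    nlinarith

end

theorem stmt13_general (F : ℝ → Set ℝ)
    (hF : CyclicallyQuasiMonotone1 F)
    (hC : (⋂ x : ℝ, CF1 F x) = ∅ ∨
      ∃ a : ℝ, (⋂ x : ℝ, CF1 F x) = Set.Ici a ∨ (⋂ x : ℝ, CF1 F x) = Set.Iic a) :
    ∀ x y : ℝ, PreceqF1 F x y ∨ PreceqF1 F y x := by
  intro x y
  by_cases hnonneg : ∀ a, ∀ p ∈ F a, 0 ≤ p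
  · exact (le_total x y).imp (preceqF1_of_le_of_nonneg hnonneg) (preceqF1_of_le_of_nonneg hnonneg)
  by_cases hnonpos : ∀ a, ∀ p ∈ F a, p ≤ 0
  · exact (le_total y x).imp (preceqF1_of_ge_of_nonpos hnonpos) (preceqF1_of_ge_of_nonpos hnonpos)
  push Not at hnonneg hnonpos
  obtain ⟨b, q, hq, hq0⟩ := hnonneg
  obtain ⟨a, p, hp, hp0⟩ := hnonpos
  have hne := iInter_CF1_nonempty hF hp hq hp0 hq0
  have hbddA : BddAbove (⋂ x, CF1 F x) := ⟨a, fun _ => ge_of_mem_iInter_CF1 hF hp hp0⟩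
  have hbddB : BddBelow (⋂ x, CF1 F x) := ⟨b, fun _ => le_of_mem_iInter_CF1 hF hq hq0⟩
  exfalso
  rcases hC with hC | ⟨c, hC | hC⟩ <;> rw [hC] at hne hbddA hbddB
  · exact Set.not_nonempty_empty hne
  · exact not_bddAbove_Ici c hbddA
  · exact not_bddBelow_Iic c hbddB

theorem stmt13 (F : ℝ → Set ℝ) (hdom : ∀ x, (F x).Nonempty)
    (hF : CyclicallyQuasiMonotone1 F)
    (hC : (⋂ x : ℝ, CF1 F x) = ∅ ∨
      ∃ a : ℝ, (⋂ x : ℝ, CF1 F x) = Set.Ici a ∨ (⋂ x : ℝ, CF1 F x) = Set.Iic a) :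
    ∀ x y : ℝ, PreceqF1 F x y ∨ PreceqF1 F y x :=
  stmt13_general F hF hC
end
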